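/- Let p and q be relatively prime positive integers and x ∈ ℝ. Let k₀ with 1 ≤ k₀ ≤ q be such that |sin 2π(x + k₀p/(2q))| = min_{1 ≤ k ≤ q} |sin 2π(x + kp/(2q))|, and assume sin 2π(x + kp/(2q)) ≠ 0 for all k ≠ k₀ with 1 ≤ k ≤ q. Then ln q + ln(2/π) < Σ_{k=1, k≠k₀}^{q} ln|sin 2π(x + kp/(2q))| + (q−1) ln 2 ≤ ln q. -/

import Mathlib

set_option maxHeartbeats 1000000

open Real Finset Polynomial

/-! Auxiliary lemmas -/

lemma AJ_abs_exp (θ : ℝ) :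
    ‖Complex.exp (2 * θ * Complex.I) - 1‖ = 2 * |Real.sin θ| := by
  have h : Complex.exp (2 * θ * Complex.I) - 1 =
      ((Real.cos (2*θ) - 1 : ℝ) : ℂ) + ((Real.sin (2*θ) : ℝ) : ℂ) * Complex.I := by
    rw [show (2 * (θ:ℂ) * Complex.I) = (((2*θ : ℝ)):ℂ) * Complex.I by push_cast; ring,
      Complex.exp_mul_I, ← Complex.ofReal_cos, ← Complex.ofReal_sin]
    push_cast; ring
  rw [h, Complex.norm_add_mul_I]
  rw [show (Real.cos (2*θ) - 1)^2 + (Real.sin (2*θ))^2 = (2*|Real.sin θ|)^2 by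
    have h1 := sq_abs (Real.sin θ)
    have h2 := Real.cos_two_mul' θ
    nlinarith [Real.sin_sq_add_cos_sq (2*θ), Real.sin_sq_add_cos_sq θ]]
  exact Real.sqrt_sq (by positivity)

lemma AJ_prod_eq (q : ℕ) (hq : 0 < q) (z w : ℂ) :
    ∏ j ∈ Finset.range q, (z - w * Complex.exp (2 * π * Complex.I / q) ^ j)
      = z ^ q - w ^ q := by
  have hζ : IsPrimitiveRoot (Complex.exp (2 * π * Complex.I / q)) q :=
    Complex.isPrimitiveRoot_exp q hq.ne'
  have h := X_pow_sub_C_eq_prod hζ hq (rfl : w ^ q = w ^ q)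
  calc ∏ j ∈ Finset.range q, (z - w * Complex.exp (2 * π * Complex.I / q) ^ j)
      = Polynomial.eval z (∏ i ∈ Finset.range q,
          ((X : ℂ[X]) - C (Complex.exp (2 * π * Complex.I / q) ^ i * w))) := by
        rw [Polynomial.eval_prod]
        simp only [eval_sub, eval_X, eval_C]
        exact Finset.prod_congr rfl (fun i _ => by ring)
    _ = Polynomial.eval z ((X : ℂ[X]) ^ q - C (w ^ q)) := by rw [← h]
    _ = z ^ q - w ^ q := by simp

lemma AJ_prod_one_sub (q : ℕ) (hq : 0 < q) :
    ‖∏ j ∈ (Finset.range q).erase 0,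
      ((1 : ℂ) - Complex.exp (2 * π * Complex.I / q) ^ j)‖ = q := by
  set ζ := Complex.exp (2 * π * Complex.I / q) with hζdef
  have hζ : IsPrimitiveRoot ζ q := Complex.isPrimitiveRoot_exp q hq.ne'
  have h0 : (0:ℕ) ∈ Finset.range q := Finset.mem_range.2 hq
  have h1 : (X : ℂ[X]) ^ q - C 1
      = (X - C (ζ ^ 0)) * ∏ j ∈ (Finset.range q).erase 0, (X - C (ζ ^ j)) := by
    rw [Finset.mul_prod_erase _ (fun j => (X:ℂ[X]) - C (ζ ^ j)) h0]
    have := X_pow_sub_C_eq_prod hζ hq (one_pow q)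
    simpa [mul_comm] using this
  have hpoly : ((X : ℂ[X]) - 1) * ∏ j ∈ (Finset.range q).erase 0, (X - C (ζ ^ j))
      = ((X : ℂ[X]) - 1) * ∑ i ∈ Finset.range q, (X : ℂ[X]) ^ i := by
    have h2 : ((X:ℂ[X]) - 1) * ∑ i ∈ Finset.range q, (X:ℂ[X]) ^ i = X ^ q - 1 := by
      have := geom_sum_mul (X : ℂ[X]) q
      linear_combination this
    rw [h2]
    simpa using h1.symm
  have hX1 : ((X : ℂ[X]) - 1) ≠ 0 := by
    simpa using X_sub_C_ne_zero (1:ℂ)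
  have hpoly2 : ∏ j ∈ (Finset.range q).erase 0, ((X:ℂ[X]) - C (ζ ^ j))
      = ∑ i ∈ Finset.range q, (X : ℂ[X]) ^ i := mul_left_cancel₀ hX1 hpoly
  have := congrArg (Polynomial.eval (1:ℂ)) hpoly2
  simp [Polynomial.eval_prod] at this
  rw [this]
  simp

lemma AJ_abs_sin_nat_mul (n : ℕ) (x : ℝ) : |Real.sin (n * x)| ≤ n * |Real.sin x| := by
  induction n with
  | zero => simp
  | succ n ih =>
    have h : ((n+1 : ℕ):ℝ) * x = n*x + x := by push_cast; ring
    rw [h, Real.sin_add]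
    calc |Real.sin (n*x) * Real.cos x + Real.cos (n*x) * Real.sin x|
        ≤ |Real.sin (n*x) * Real.cos x| + |Real.cos (n*x) * Real.sin x| := abs_add_le _ _
      _ ≤ |Real.sin (n*x)| * 1 + 1 * |Real.sin x| := by
          rw [abs_mul, abs_mul]
          gcongr <;> first | exact Real.abs_cos_le_one _ | exact abs_nonneg _
      _ ≤ n * |Real.sin x| + 1 * |Real.sin x| := by simpa using ih
      _ = ((n+1 : ℕ):ℝ) * |Real.sin x| := by push_cast; ring

lemma AJ_abs_sin_eq {r : ℝ} (hr : |r| ≤ π) : |Real.sin r| = Real.sin |r| := by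
  rcases le_or_gt 0 r with h | h
  · rw [abs_of_nonneg h, abs_of_nonneg (Real.sin_nonneg_of_nonneg_of_le_pi h
      (by rwa [abs_of_nonneg h] at hr))]
  · rw [abs_of_neg h, Real.sin_neg, abs_of_nonpos
      (Real.sin_nonpos_of_nonpos_of_neg_pi_le h.le
        (by rw [abs_of_neg h] at hr; linarith))]

lemma AJ_abs_neg_one_zpow_mul (m : ℤ) (a : ℝ) : |(-1:ℝ)^m * a| = |a| := by
  rcases Int.even_or_odd m with he | ho
  · rw [he.neg_one_zpow, one_mul]
  · rw [Odd.neg_one_zpow ho, neg_one_mul, abs_neg]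

lemma AJ_eq_of_Icc {q k₁ k₂ : ℕ} (h1 : k₁ ∈ Finset.Icc 1 q) (h2 : k₂ ∈ Finset.Icc 1 q)
    (h : k₁ ≡ k₂ [MOD q]) : k₁ = k₂ := by
  simp only [Finset.mem_Icc] at h1 h2
  rcases eq_or_lt_of_le h1.2 with e1 | l1 <;> rcases eq_or_lt_of_le h2.2 with e2 | l2
  · omega
  · exfalso
    have : k₂ % q = k₂ := Nat.mod_eq_of_lt l2
    have hq0 : k₁ % q = 0 := by rw [e1]; exact Nat.mod_self q
    unfold Nat.ModEq at h; omega
  · exfalso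
    have : k₁ % q = k₁ := Nat.mod_eq_of_lt l1
    have hq0 : k₂ % q = 0 := by rw [e2]; exact Nat.mod_self q
    unfold Nat.ModEq at h; omega
  · unfold Nat.ModEq at h
    rw [Nat.mod_eq_of_lt l1, Nat.mod_eq_of_lt l2] at h; exact h

/-- Lemma 9.6 of Avila–Jitomirskaya: two-sided estimate for sums of `ln |sin|`
over an arithmetic progression, omitting the minimal term. -/
theorem sum_log_sin_bounds
    (p q : ℕ) (hp : 0 < p) (hq : 0 < q) (hpq : Nat.Coprime p q) (x : ℝ)
    (k₀ : ℕ) (hk₀1 : 1 ≤ k₀) (hk₀q : k₀ ≤ q)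
    (hmin : ∀ k : ℕ, 1 ≤ k → k ≤ q →
      |Real.sin (2 * π * (x + (k₀ : ℝ) * p / (2 * q)))| ≤
        |Real.sin (2 * π * (x + (k : ℝ) * p / (2 * q)))|)
    (hne : ∀ k : ℕ, 1 ≤ k → k ≤ q → k ≠ k₀ →
      Real.sin (2 * π * (x + (k : ℝ) * p / (2 * q))) ≠ 0) :
    Real.log q + Real.log (2 / π) <
      (∑ k ∈ (Finset.Icc 1 q).erase k₀,
          Real.log |Real.sin (2 * π * (x + (k : ℝ) * p / (2 * q)))|) +
        ((q : ℝ) - 1) * Real.log 2 ∧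
    (∑ k ∈ (Finset.Icc 1 q).erase k₀,
        Real.log |Real.sin (2 * π * (x + (k : ℝ) * p / (2 * q)))|) +
      ((q : ℝ) - 1) * Real.log 2 ≤ Real.log q := by
  have hqR : (0:ℝ) < q := by exact_mod_cast hq
  have hqC : (q:ℂ) ≠ 0 := by exact_mod_cast hq.ne'
  set t : ℕ → ℝ := fun k => 2 * π * (x + (k : ℝ) * p / (2 * q)) with ht
  set ζ : ℂ := Complex.exp (2 * π * Complex.I / q) with hζdef
  set w : ℂ := Complex.exp (2 * π * (2 * x) * Complex.I) with hwdef
  have hζq : ζ ^ q = 1 := (Complex.isPrimitiveRoot_exp q hq.ne').pow_eq_one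
  -- F1
  have F1 : ∀ k : ℕ, ‖w * ζ ^ (k * p) - 1‖ = 2 * |Real.sin (t k)| := by
    intro k
    have harg : w * ζ ^ (k * p) = Complex.exp (2 * (t k : ℝ) * Complex.I) := by
      rw [hwdef, hζdef, ← Complex.exp_nat_mul, ← Complex.exp_add]
      congr 1
      have htk : ((t k : ℝ) : ℂ) = 2 * (π:ℂ) * ((x:ℂ) + (k:ℂ) * p / (2 * q)) := by
        rw [ht]; push_cast; ring
      rw [htk]
      field_simp
      push_cast; ring
    rw [harg, AJ_abs_exp]
  -- residue reduction
  have hres : ∀ n : ℕ, ζ ^ n = ζ ^ (n % q) := by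
    intro n
    conv_lhs => rw [← Nat.div_add_mod n q]
    rw [pow_add, pow_mul, hζq, one_pow, one_mul]
  -- the map k ↦ k*p % q
  have hinj : ∀ k₁ ∈ Finset.Icc 1 q, ∀ k₂ ∈ Finset.Icc 1 q,
      k₁ * p % q = k₂ * p % q → k₁ = k₂ := by
    intro k₁ h1 k₂ h2 h
    exact AJ_eq_of_Icc h1 h2
      (Nat.ModEq.cancel_right_of_coprime (by rwa [Nat.Coprime, Nat.gcd_comm] at hpq) h)
  have hmaps : ∀ k ∈ Finset.Icc 1 q, k * p % q ∈ Finset.range q :=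
    fun k _ => Finset.mem_range.2 (Nat.mod_lt _ hq)
  have hcard : (Finset.range q).card ≤ (Finset.Icc 1 q).card := by
    rw [Nat.card_Icc, Finset.card_range]; omega
  have hsurj := Finset.surj_on_of_inj_on_of_card_le (fun k _ => k * p % q)
    hmaps (fun a₁ a₂ h₁ h₂ => hinj a₁ h₁ a₂ h₂) hcard
  -- full product
  have hk₀mem : k₀ ∈ Finset.Icc 1 q := Finset.mem_Icc.2 ⟨hk₀1, hk₀q⟩
  set P₀ : ℝ := ∏ k ∈ (Finset.Icc 1 q).erase k₀, (2 * |Real.sin (t k)|) with hP₀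
  have MAIN : (2 * |Real.sin (t k₀)|) * P₀ = 2 * |Real.sin (π * q * (2 * x))| := by
    have step1 : (2 * |Real.sin (t k₀)|) * P₀
        = ∏ k ∈ Finset.Icc 1 q, (2 * |Real.sin (t k)|) := by
      rw [hP₀]
      exact Finset.mul_prod_erase _ (fun k => 2 * |Real.sin (t k)|) hk₀mem
    have step2 : ∏ k ∈ Finset.Icc 1 q, (2 * |Real.sin (t k)|)
        = ‖∏ k ∈ Finset.Icc 1 q, (w * ζ ^ (k * p) - 1)‖ := by
      rw [norm_prod]
      exact Finset.prod_congr rfl (fun k _ => (F1 k).symm)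
    have step4 : ∏ k ∈ Finset.Icc 1 q, (w * ζ ^ (k * p) - 1)
        = ∏ j ∈ Finset.range q, (w * ζ ^ j - 1) := by
      have : ∀ k ∈ Finset.Icc 1 q, (w * ζ ^ (k * p) - 1) = w * ζ ^ (k * p % q) - 1 := by
        intro k _; rw [← hres]
      rw [Finset.prod_congr rfl this]
      exact Finset.prod_bij (fun k _ => k * p % q) hmaps hinj
        (fun b hb => by obtain ⟨a, ha, e⟩ := hsurj b hb; exact ⟨a, ha, e.symm⟩)
        (fun k _ => rfl)
    have step5 : ∏ j ∈ Finset.range q, (w * ζ ^ j - 1) = (-1) ^ q * (1 - w ^ q) := by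
      have h1 : ∀ j ∈ Finset.range q, (w * ζ ^ j - 1) = (-1) * (1 - w * ζ ^ j) := by
        intro j _; ring
      rw [Finset.prod_congr rfl h1, Finset.prod_mul_distrib, Finset.prod_const,
        Finset.card_range]
      congr 1
      have := AJ_prod_eq q hq 1 w
      rw [← hζdef] at this
      rw [this, one_pow]
    have step6 : ‖(-1) ^ q * (1 - w ^ q)‖ = 2 * |Real.sin (π * q * (2 * x))| := by
      rw [norm_mul, norm_pow, norm_neg, norm_one, one_pow, one_mul]
      have hwq : w ^ q = Complex.exp (2 * ((π * q * (2 * x) : ℝ) : ℂ) * Complex.I) := by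
        rw [hwdef, ← Complex.exp_nat_mul]
        congr 1
        push_cast; ring
      rw [show (1 - w ^ q) = -(w ^ q - 1) by ring, norm_neg, hwq]
      exact AJ_abs_exp (π * q * (2 * x))
    rw [step1, step2, step4, step5, step6]
  -- positivity of factors
  have hfpos : ∀ k ∈ (Finset.Icc 1 q).erase k₀, 0 < 2 * |Real.sin (t k)| := by
    intro k hk
    rcases Finset.mem_erase.1 hk with ⟨hkne, hkmem⟩
    rcases Finset.mem_Icc.1 hkmem with ⟨hk1, hkq⟩
    have := hne k hk1 hkq hkne
    have : |Real.sin (t k)| > 0 := abs_pos.2 this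
    linarith
  have hP₀pos : 0 < P₀ := Finset.prod_pos hfpos
  -- the two bounds on P₀
  have hbounds : 2 / π * q < P₀ ∧ P₀ ≤ q := by
    by_cases hs : Real.sin (t k₀) = 0
    · -- degenerate case : P₀ = q
      have hP₀q : P₀ = q := by
        have hwz : w * ζ ^ (k₀ * p) = 1 := by
          have h1 := F1 k₀
          rw [hs] at h1
          simp only [abs_zero, mul_zero] at h1
          exact sub_eq_zero.1 (norm_eq_zero.1 h1)
        have hζne : ζ ^ (k₀ * p) ≠ 0 := pow_ne_zero _ (Complex.exp_ne_zero _)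
        have hwinv : w = ζ ^ ((q - k₀) * p) := by
          have h2 : ζ ^ ((q - k₀) * p) * ζ ^ (k₀ * p) = 1 := by
            rw [← pow_add, ← add_mul, Nat.sub_add_cancel hk₀q, pow_mul, hζq, one_pow]
          exact mul_right_cancel₀ hζne (hwz.trans h2.symm)
        have hwζ : ∀ k : ℕ, w * ζ ^ (k * p) = ζ ^ ((k + q - k₀) * p % q) := by
          intro k
          rw [← hres, hwinv, ← pow_add, ← add_mul]
          congr 2
          omega
        -- the shifted map ψ
        have hψmaps : ∀ k ∈ (Finset.Icc 1 q).erase k₀,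
            (k + q - k₀) * p % q ∈ (Finset.range q).erase 0 := by
          intro k hk
          rcases Finset.mem_erase.1 hk with ⟨hkne, hkmem⟩
          rcases Finset.mem_Icc.1 hkmem with ⟨hk1, hkq⟩
          refine Finset.mem_erase.2 ⟨?_, Finset.mem_range.2 (Nat.mod_lt _ hq)⟩
          intro h0
          have hdvd : q ∣ (k + q - k₀) * p := Nat.dvd_of_mod_eq_zero h0
          have hdvd2 : q ∣ (k + q - k₀) :=
            (Nat.Coprime.dvd_of_dvd_mul_right (Nat.Coprime.symm hpq) hdvd)
          obtain ⟨c, hc⟩ := hdvd2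
          rcases Nat.lt_or_ge c 2 with hc2 | hc2
          · interval_cases c <;> omega
          · have : q * 2 ≤ q * c := Nat.mul_le_mul_left q hc2
            omega
        have hψinj : ∀ k₁ ∈ (Finset.Icc 1 q).erase k₀, ∀ k₂ ∈ (Finset.Icc 1 q).erase k₀,
            (k₁ + q - k₀) * p % q = (k₂ + q - k₀) * p % q → k₁ = k₂ := by
          intro k₁ h1 k₂ h2 h
          have h1' := Finset.mem_of_mem_erase h1
          have h2' := Finset.mem_of_mem_erase h2
          have hmodeq : (k₁ + q - k₀) ≡ (k₂ + q - k₀) [MOD q] :=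
            Nat.ModEq.cancel_right_of_coprime
              (by rwa [Nat.Coprime, Nat.gcd_comm] at hpq) h
          have e1 : k₁ + q - k₀ = k₁ + (q - k₀) := by omega
          have e2 : k₂ + q - k₀ = k₂ + (q - k₀) := by omega
          rw [e1, e2] at hmodeq
          exact AJ_eq_of_Icc h1' h2' (Nat.ModEq.add_right_cancel' _ hmodeq)
        have hψcard : ((Finset.range q).erase 0).card ≤ ((Finset.Icc 1 q).erase k₀).card := by
          rw [Finset.card_erase_of_mem (Finset.mem_range.2 hq),
            Finset.card_erase_of_mem hk₀mem, Finset.card_range, Nat.card_Icc]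
          omega
        have hψsurj := Finset.surj_on_of_inj_on_of_card_le (fun k _ => (k + q - k₀) * p % q)
          hψmaps (fun a₁ a₂ ha₁ ha₂ => hψinj a₁ ha₁ a₂ ha₂) hψcard
        have c1 : P₀ = ‖∏ k ∈ (Finset.Icc 1 q).erase k₀, (w * ζ ^ (k * p) - 1)‖ := by
          rw [hP₀, norm_prod]
          exact Finset.prod_congr rfl (fun k _ => (F1 k).symm)
        have c2 : ∏ k ∈ (Finset.Icc 1 q).erase k₀, (w * ζ ^ (k * p) - 1)
            = ∏ j ∈ (Finset.range q).erase 0, (ζ ^ j - 1) := by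
          have hcongr : ∀ k ∈ (Finset.Icc 1 q).erase k₀,
              (w * ζ ^ (k * p) - 1) = ζ ^ ((k + q - k₀) * p % q) - 1 := by
            intro k _; rw [hwζ]
          rw [Finset.prod_congr rfl hcongr]
          exact Finset.prod_bij (fun k _ => (k + q - k₀) * p % q) hψmaps hψinj
            (fun b hb => by obtain ⟨a, ha, e⟩ := hψsurj b hb; exact ⟨a, ha, e.symm⟩)
            (fun k _ => rfl)
        have c3 : ‖∏ j ∈ (Finset.range q).erase 0, (ζ ^ j - 1)‖ = q := by
          have hneg : ∀ j ∈ (Finset.range q).erase 0, (ζ ^ j - 1 : ℂ) = (-1) * (1 - ζ ^ j) := by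
            intro j _; ring
          rw [Finset.prod_congr rfl hneg, Finset.prod_mul_distrib, Finset.prod_const, norm_mul,
            norm_pow, norm_neg, norm_one, one_pow, one_mul]
          rw [hζdef]
          exact AJ_prod_one_sub q hq
        rw [c1, c2, c3]
      rw [hP₀q]
      constructor
      · have hπ2 : (2:ℝ) < π := by linarith [Real.pi_gt_three]
        have : 2 / π < 1 := by
          rw [div_lt_one Real.pi_pos]; exact hπ2
        nlinarith
      · exact le_refl _
    · -- main case : sin (t k₀) ≠ 0
      have hπ0 : (0:ℝ) < π := Real.pi_pos
      have hq1 : (1:ℝ) ≤ q := by exact_mod_cast hq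
      have hπ2q : π/(2*q) ≤ π/2 := by
        rw [div_le_div_iff₀ (by positivity) (by positivity)]
        nlinarith
      set m : ℤ := round (t k₀ / π) with hm
      set r : ℝ := t k₀ - m * π with hr
      have hreq : r = (t k₀ / π - m) * π := by rw [hr]; field_simp
      have hrle : |r| ≤ π / 2 := by
        rw [hreq, abs_mul, abs_of_pos hπ0]
        have := abs_sub_round (t k₀ / π)
        nlinarith
      have htk0 : t k₀ = r + m * π := by rw [hr]; ring
      have hsin_k₀ : |Real.sin (t k₀)| = Real.sin |r| := by
        rw [htk0, Real.sin_add_int_mul_pi, AJ_abs_neg_one_zpow_mul]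
        exact AJ_abs_sin_eq (hrle.trans (by linarith))
      have hd0 : 0 < |r| := by
        rcases (abs_nonneg r).eq_or_lt with h | h
        · exfalso
          have : |Real.sin (t k₀)| = 0 := by rw [hsin_k₀, ← h, Real.sin_zero]
          exact hs (abs_eq_zero.1 this)
        · exact h
      -- construct good index k₁
      set n : ℤ := round (2 * (q:ℝ) * x) with hn
      have hqZ : (0:ℤ) < (q:ℤ) := by exact_mod_cast hq
      have hmod1 : (0:ℤ) ≤ (-n) % (q:ℤ) := Int.emod_nonneg _ hqZ.ne'
      have hmod2 : (-n) % (q:ℤ) < q := Int.emod_lt_of_pos _ hqZ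
      set j' : ℕ := ((-n) % (q:ℤ)).toNat with hj'
      have hj'mem : j' ∈ Finset.range q := Finset.mem_range.2 (by omega)
      obtain ⟨k₁, hk₁mem, hk₁e⟩ := hsurj j' hj'mem
      rcases Finset.mem_Icc.1 hk₁mem with ⟨hk₁1, hk₁q⟩
      have hj'int : (j' : ℤ) = -n - (q:ℤ) * ((-n) / (q:ℤ)) := by
        rw [hj', Int.toNat_of_nonneg hmod1, Int.emod_def]
      have hA : (k₁ * p) = q * (k₁ * p / q) + j' := by
        rw [hk₁e]
        exact (Nat.div_add_mod _ q).symm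
      set sI : ℤ := -((-n) / (q:ℤ)) + (k₁ * p / q : ℕ) with hsdef
      have hteq : t k₁ = π / q * (2*q*x - n) + (sI : ℝ) * π := by
        have hAR : ((k₁ * p : ℕ) : ℝ) = q * ((k₁ * p / q : ℕ) : ℝ) + ((j' : ℕ) : ℝ) := by
          exact_mod_cast congrArg (fun z : ℕ => (z : ℝ)) hA
        have hBR : ((j' : ℕ) : ℝ) = -(n:ℝ) - q * ((((-n) / (q:ℤ)) : ℤ) : ℝ) := by
          exact_mod_cast hj'int
        have ht1 : t k₁ = 2*π*x + π * ((k₁ * p : ℕ):ℝ) / q := by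
          rw [ht]; push_cast; field_simp
        have hsIR : ((sI : ℤ) : ℝ) = -((((-n)/(q:ℤ)) : ℤ) : ℝ) + ((k₁ * p / q : ℕ) : ℝ) := by
          rw [hsdef, Int.cast_add, Int.cast_neg, Int.cast_natCast]
        rw [ht1, hAR, hBR, hsIR]
        field_simp
        ring
      have hround : |2*(q:ℝ)*x - n| ≤ 1/2 := abs_sub_round (2*(q:ℝ)*x)
      have hc'le : |π/q * (2*q*x - n)| ≤ π/(2*q) := by
        rw [abs_mul, abs_of_pos (by positivity : (0:ℝ) < π/q)]
        calc (π/q) * |2*q*x - n| ≤ (π/q) * (1/2) := by gcongr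
          _ = π/(2*q) := by ring
      have hsin_k₁ : |Real.sin (t k₁)| = Real.sin |π/q * (2*q*x - n)| := by
        rw [hteq, Real.sin_add_int_mul_pi, AJ_abs_neg_one_zpow_mul]
        exact AJ_abs_sin_eq (hc'le.trans (by linarith))
      have hminle : Real.sin |r| ≤ Real.sin |π/q * (2*q*x - n)| := by
        rw [← hsin_k₀, ← hsin_k₁]
        exact hmin k₁ hk₁1 hk₁q
      have hdle : |r| ≤ π/(2*q) := by
        by_contra hcon
        push_neg at hcon
        have h1 : |π/q*(2*q*x - n)| < |r| := lt_of_le_of_lt hc'le hcon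
        have h2 := Real.strictMonoOn_sin
          (Set.mem_Icc.2 ⟨by have := abs_nonneg (π/q*(2*q*x - n)); linarith,
            hc'le.trans hπ2q⟩)
          (Set.mem_Icc.2 ⟨by have := abs_nonneg r; linarith, hrle⟩) h1
        linarith
      have hqd : (q:ℝ) * |r| ≤ π/2 := by
        have h1 : (q:ℝ) * |r| ≤ q * (π/(2*q)) := by gcongr
        have h2 : (q:ℝ) * (π/(2*q)) = π/2 := by field_simp
        linarith
      have hqsin : |Real.sin (π * q * (2*x))| = Real.sin ((q:ℝ) * |r|) := by
        have h2 : π * (q:ℝ) * (2*x) = q * t k₀ + ((-(k₀*p : ℕ) : ℤ):ℝ) * π := by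
          rw [ht]; push_cast; field_simp; ring
        rw [h2, Real.sin_add_int_mul_pi, AJ_abs_neg_one_zpow_mul]
        have h3 : (q:ℝ) * t k₀ = q * r + ((q * m : ℤ):ℝ) * π := by
          rw [htk0]; push_cast; ring
        rw [h3, Real.sin_add_int_mul_pi, AJ_abs_neg_one_zpow_mul]
        have h4 : |(q:ℝ) * r| ≤ π := by
          rw [abs_mul, abs_of_nonneg hqR.le]; linarith
        rw [AJ_abs_sin_eq h4, abs_mul, abs_of_nonneg hqR.le]
      rw [hsin_k₀, hqsin] at MAIN
      have hsind : 0 < Real.sin |r| := by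
        rw [← hsin_k₀]; exact abs_pos.2 hs
      have hupper : Real.sin ((q:ℝ)*|r|) ≤ q * Real.sin |r| := by
        have h1 := AJ_abs_sin_nat_mul q |r|
        rw [abs_of_pos hsind] at h1
        exact (le_abs_self _).trans h1
      have hlower : 2/π * ((q:ℝ) * |r|) ≤ Real.sin ((q:ℝ)*|r|) :=
        Real.mul_le_sin (by positivity) hqd
      have hsinlt : Real.sin |r| < |r| := Real.sin_lt hd0
      constructor
      · nlinarith [MAIN, hlower, hsinlt, hsind, hP₀pos, hqR, hπ0,
          mul_pos (show (0:ℝ) < 2/π*q by positivity) (sub_pos.2 hsinlt)]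
      · nlinarith [MAIN, hupper, hsind]
  -- conclusion
  have hkey : (∑ k ∈ (Finset.Icc 1 q).erase k₀,
      Real.log |Real.sin (2 * π * (x + (k : ℝ) * p / (2 * q)))|) +
      ((q : ℝ) - 1) * Real.log 2 = Real.log P₀ := by
    rw [hP₀, Real.log_prod (fun k hk => (hfpos k hk).ne')]
    have : ∀ k ∈ (Finset.Icc 1 q).erase k₀,
        Real.log (2 * |Real.sin (t k)|) = Real.log 2 + Real.log |Real.sin (t k)| := by
      intro k hk
      rw [Real.log_mul two_ne_zero]
      intro h0
      exact (hfpos k hk).ne' (by rw [h0, mul_zero])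
    rw [Finset.sum_congr rfl this, Finset.sum_add_distrib, Finset.sum_const]
    have hcarderase : ((Finset.Icc 1 q).erase k₀).card = q - 1 := by
      rw [Finset.card_erase_of_mem hk₀mem, Nat.card_Icc]; omega
    rw [hcarderase]
    have : ((q - 1 : ℕ) : ℝ) = (q : ℝ) - 1 := by
      have : (1:ℕ) ≤ q := hq
      push_cast [Nat.cast_sub this]; ring
    rw [nsmul_eq_mul, this, ht]
    ring
  constructor
  · rw [hkey]
    have h2π : Real.log q + Real.log (2/π) = Real.log (2/π * q) := by
      rw [Real.log_mul (by positivity) hqR.ne', add_comm]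
    rw [h2π]
    exact Real.log_lt_log (by positivity) hbounds.1
  · rw [hkey]
    have := Real.log_le_log_iff hP₀pos hqR
    exact this.2 hbounds.2
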